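/- Let n ≥ 10, let C > 0, and for x, z ∈ ℝ and y ∈ ℝⁿ define h(x,z;y) = -(1/2)·Σ_{i=1}^{n-1}(y_i - y_{i+1})² - (1/(2n²))·‖y‖₂² + √(C/n)·(x·y₁ - (1/2)·z·y_n). Then the supremum over y ∈ ℝⁿ is attained and equals h_m(x,z) = C·( (a₁/2)·x² - (1/2)·a₂·x·z + (a₁/8)·z² ), where a₁ = B_{1,1}/n and a₂ = B_{n,1}/n with B = ((1/n²)·I_n + A)^{-1}; moreover 0.1 ≤ a₁ ≤ 20 and 0.1 ≤ a₂ ≤ 20. -/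

import Mathlib

open Matrix

/-- The `n × n` tridiagonal matrix with `A 1 1 = A n n = 1`, diagonal `2` otherwise,
off-diagonal entries `-1`, and all other entries `0` (0-indexed in Lean). -/
noncomputable def triA (n : ℕ) : Matrix (Fin n) (Fin n) ℝ :=
  Matrix.of fun i j =>
    if i = j then (if (i : ℕ) = 0 ∨ (i : ℕ) = n - 1 then 1 else 2)
    else if (i : ℕ) + 1 = (j : ℕ) ∨ (j : ℕ) + 1 = (i : ℕ) then -1 else 0

/-- `B = (α I + A)⁻¹`. -/
noncomputable def Bmat (n : ℕ) (α : ℝ) : Matrix (Fin n) (Fin n) ℝ :=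
  (α • (1 : Matrix (Fin n) (Fin n) ℝ) + triA n)⁻¹

/-- `h(x, z; y) = -(1/2)·Σ_{i=1}^{n-1} (yᵢ - yᵢ₊₁)² - (1/(2n²))·‖y‖₂²
    + √(C/n)·(x y₁ - (1/2) z yₙ)`. -/
noncomputable def hfun (n : ℕ) (hn : 0 < n) (C x z : ℝ) (y : Fin n → ℝ) : ℝ :=
  -(1 / 2) * (∑ i : Fin n, if h : (i : ℕ) + 1 < n then (y i - y ⟨(i : ℕ) + 1, h⟩) ^ 2 else 0)
    - (1 / (2 * (n : ℝ) ^ 2)) * ∑ i : Fin n, (y i) ^ 2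
    + Real.sqrt (C / n) * (x * y ⟨0, hn⟩ - (1 / 2) * z * y ⟨n - 1, by omega⟩)

/-!
Write `M = n⁻² I + A`. Its quadratic form is `yᵀMy = n⁻² ‖y‖² + Σᵢ (yᵢ - yᵢ₊₁)²`, so `M` is
positive definite and `h(x,z;·) = ½ (2 bᵀy - yᵀMy)` with `b = √(C/n) b_{x,z}` is maximised at
`y = Bb`, with value `½ bᵀBb`. As `M` is symmetric and invariant under reversing the indices,
`B₁ₙ = Bₙ₁` and `Bₙₙ = B₁₁`, which turns `½ bᵀBb` into the stated formula.

The same variational principle `bᵀBb = max_y (2 bᵀy - yᵀMy)` bounds the entries of `B`. Testing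
`b = e₁` against the constant vector `n 𝟙` gives `B₁₁ ≥ n`. Cauchy–Schwarz on telescoping sums gives
`(yᵢ - yⱼ)² ≤ n yᵀMy` and `yᵢ² ≤ 2n yᵀMy`, whence `B₁₁ ≤ 2n` and, for `b = e₁ - eₙ`,
`0 ≤ 2 (B₁₁ - Bₙ₁) ≤ n`. So `a₁ ∈ [1, 2]` and `a₂ ∈ [1/2, 2]`.
-/

section QuadraticMaximum

variable {ι : Type*} [Fintype ι] {M : Matrix ι ι ℝ} {b y₀ : ι → ℝ}

lemma two_dotProduct_sub_le_of_mulVec_eq (hM : M.PosSemidef) (hy₀ : M *ᵥ y₀ = b)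
    (y : ι → ℝ) : 2 * (b ⬝ᵥ y) - y ⬝ᵥ (M *ᵥ y) ≤ b ⬝ᵥ y₀ := by
  have hsymm : y₀ ⬝ᵥ (M *ᵥ y) = y ⬝ᵥ b := by
    rw [dotProduct_mulVec, ← mulVec_transpose, ← conjTranspose_eq_transpose_of_trivial,
      hM.isHermitian.eq, hy₀, dotProduct_comm]
  have hnonneg := hM.dotProduct_mulVec_nonneg (y - y₀)
  simp only [star_trivial, mulVec_sub, sub_dotProduct, dotProduct_sub, hy₀, hsymm] at hnonneg
  rw [dotProduct_comm b y, dotProduct_comm b y₀]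
  linarith

lemma two_dotProduct_sub_self_of_mulVec_eq (hy₀ : M *ᵥ y₀ = b) :
    2 * (b ⬝ᵥ y₀) - y₀ ⬝ᵥ (M *ᵥ y₀) = b ⬝ᵥ y₀ := by
  rw [hy₀, dotProduct_comm]
  ring

end QuadraticMaximum

open Finset

section PathLaplacian

variable {n : ℕ}

def pathEnergy (y : Fin n → ℝ) : ℝ :=
  ∑ i : Fin n, if h : (i : ℕ) + 1 < n then (y i - y ⟨i + 1, h⟩) ^ 2 else 0

lemma sum_dite_succ_lt {m : ℕ} (F : Fin (m + 1) → Fin (m + 1) → ℝ) :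
    (∑ i : Fin (m + 1), if h : (i : ℕ) + 1 < m + 1 then F i ⟨i + 1, h⟩ else 0) =
      ∑ k : Fin m, F k.castSucc k.succ := by
  rw [Fin.sum_univ_castSucc, dif_neg (by simp), add_zero]
  exact sum_congr rfl fun k _ => dif_pos (by simp)

lemma pathEnergy_nonneg (y : Fin n → ℝ) : 0 ≤ pathEnergy y :=
  sum_nonneg fun i _ => by split_ifs <;> positivity

lemma triA_row_eq (hn : 2 ≤ n) (i : Fin n) :
    (fun j => triA n i j) =
      (if h : (i : ℕ) + 1 < n then Pi.single i 1 - Pi.single ⟨i + 1, h⟩ 1 else 0) +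
      (if h : 0 < (i : ℕ) then Pi.single i 1 - Pi.single ⟨i - 1, by omega⟩ 1 else 0) := by
  funext j
  simp only [triA, of_apply, Pi.add_apply, Fin.ext_iff]
  split_ifs <;> simp only [Pi.sub_apply, Pi.single_apply, Fin.ext_iff, Pi.zero_apply] <;>
    (try split_ifs) <;> first | omega | norm_num

lemma triA_mulVec_apply (hn : 2 ≤ n) (y : Fin n → ℝ) (i : Fin n) :
    (triA n *ᵥ y) i =
      (if h : (i : ℕ) + 1 < n then y i - y ⟨i + 1, h⟩ else 0) +
      (if h : 0 < (i : ℕ) then y i - y ⟨i - 1, by omega⟩ else 0) := by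
  rw [mulVec, triA_row_eq hn]
  split_ifs <;> simp

lemma dotProduct_triA_mulVec (hn : 2 ≤ n) (y : Fin n → ℝ) :
    y ⬝ᵥ (triA n *ᵥ y) = pathEnergy y := by
  obtain ⟨m, rfl⟩ : ∃ m, n = m + 1 := ⟨n - 1, by omega⟩
  have forward : (∑ i : Fin (m + 1),
      y i * if h : (i : ℕ) + 1 < m + 1 then y i - y ⟨i + 1, h⟩ else 0) =
      ∑ k : Fin m, y k.castSucc * (y k.castSucc - y k.succ) := by
    simp only [mul_dite, mul_zero]
    exact sum_dite_succ_lt fun i j => y i * (y i - y j)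
  have backward : (∑ i : Fin (m + 1),
      y i * if h : 0 < (i : ℕ) then y i - y ⟨i - 1, by omega⟩ else 0) =
      ∑ k : Fin m, y k.succ * (y k.succ - y k.castSucc) := by
    rw [Fin.sum_univ_succ, dif_neg (by simp), mul_zero, zero_add]
    exact sum_congr rfl fun k _ => by rw [dif_pos (by simp)]; rfl
  simp only [dotProduct, triA_mulVec_apply hn, mul_add]
  rw [sum_add_distrib, forward, backward, pathEnergy, sum_dite_succ_lt fun i j => (y i - y j) ^ 2,
    ← sum_add_distrib]
  exact sum_congr rfl fun k _ => by ring

lemma sq_sub_le_mul_pathEnergy (y : Fin n → ℝ) (i j : Fin n) :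
    (y i - y j) ^ 2 ≤ n * pathEnergy y := by
  wlog hij : i ≤ j generalizing i j
  · rw [← neg_sub, neg_sq]
    exact this j i (le_of_not_ge hij)
  obtain ⟨m, rfl⟩ : ∃ m, n = m + 1 := ⟨n - 1, by omega⟩
  set g : ℕ → ℝ := fun k => if h : k < m + 1 then y ⟨k, h⟩ else 0
  have hg : ∀ k (hk : k < m + 1), g k = y ⟨k, hk⟩ := fun k hk => dif_pos hk
  have hE : pathEnergy y = ∑ k ∈ range m, (g (k + 1) - g k) ^ 2 := by
    rw [pathEnergy, sum_dite_succ_lt fun i j => (y i - y j) ^ 2,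
      ← Fin.sum_univ_eq_sum_range fun k => (g (k + 1) - g k) ^ 2]
    exact sum_congr rfl fun k _ => by
      rw [hg k (by omega), hg (k + 1) (by omega), sub_sq_comm]
      rfl
  calc (y i - y j) ^ 2 = (∑ k ∈ Ico (i : ℕ) j, (g (k + 1) - g k)) ^ 2 := by
        rw [sum_Ico_sub g hij, hg i i.isLt, hg j j.isLt, sub_sq_comm]
    _ ≤ #(Ico (i : ℕ) j) * ∑ k ∈ Ico (i : ℕ) j, (g (k + 1) - g k) ^ 2 :=
        sq_sum_le_card_mul_sum_sq
    _ ≤ (m + 1 : ℕ) * pathEnergy y := by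
        rw [hE]
        gcongr
        · rw [Nat.card_Ico]
          omega
        · intro k hk
          simp only [mem_Ico, mem_range] at hk ⊢
          omega

lemma pathEnergy_const (c : ℝ) : pathEnergy (fun _ : Fin n => c) = 0 := by
  simp [pathEnergy]

lemma mul_sq_le_sum_sq_add_pathEnergy (y : Fin n → ℝ) (i : Fin n) :
    n * y i ^ 2 ≤ 2 * (∑ j, y j ^ 2 + n ^ 2 * pathEnergy y) :=
  calc (n : ℝ) * y i ^ 2 = ∑ _j : Fin n, y i ^ 2 := by simp
    _ ≤ ∑ j, (2 * y j ^ 2 + 2 * (y i - y j) ^ 2) :=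
        sum_le_sum fun j _ => by nlinarith [sq_nonneg (y i - 2 * y j)]
    _ ≤ ∑ j, (2 * y j ^ 2 + 2 * (n * pathEnergy y)) := by
        gcongr with j
        exact sq_sub_le_mul_pathEnergy y i j
    _ = 2 * (∑ j, y j ^ 2 + n ^ 2 * pathEnergy y) := by
        simp only [sum_add_distrib, ← mul_sum, sum_const, card_univ, Fintype.card_fin,
          nsmul_eq_mul]
        ring

lemma triA_isSymm : (triA n).IsSymm :=
  IsSymm.ext fun i j => by
    simp only [triA, of_apply, Fin.ext_iff]
    split_ifs <;> first | rfl | omega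

lemma triA_posSemidef (hn : 2 ≤ n) : (triA n).PosSemidef :=
  PosSemidef.of_dotProduct_mulVec_nonneg (isHermitian_iff_isSymm.2 triA_isSymm) fun y => by
    rw [star_trivial, dotProduct_triA_mulVec hn]
    exact pathEnergy_nonneg y

lemma triA_rev_rev (i j : Fin n) : triA n i.rev j.rev = triA n i j := by
  simp only [triA, of_apply, Fin.rev_inj, Fin.val_rev]
  have := i.isLt
  have := j.isLt
  split_ifs <;> first | rfl | omega

end PathLaplacian

section ShiftedPathLaplacian

variable {n : ℕ}

noncomputable def shiftedTriA (n : ℕ) (α : ℝ) : Matrix (Fin n) (Fin n) ℝ :=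
  α • (1 : Matrix (Fin n) (Fin n) ℝ) + triA n

lemma Bmat_eq_inv (α : ℝ) : Bmat n α = (shiftedTriA n α)⁻¹ := rfl

lemma shiftedTriA_posDef (hn : 2 ≤ n) {α : ℝ} (hα : 0 < α) : (shiftedTriA n α).PosDef :=
  (PosDef.one.smul hα).add_posSemidef (triA_posSemidef hn)

lemma dotProduct_shiftedTriA_mulVec (hn : 2 ≤ n) (α : ℝ) (y : Fin n → ℝ) :
    y ⬝ᵥ (shiftedTriA n α *ᵥ y) = α * ∑ i, y i ^ 2 + pathEnergy y := by
  rw [shiftedTriA, add_mulVec, smul_mulVec, one_mulVec, dotProduct_add, dotProduct_smul,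
    dotProduct_triA_mulVec hn, smul_eq_mul]
  simp only [dotProduct, sq]

lemma Bmat_symm (α : ℝ) (i j : Fin n) : Bmat n α i j = Bmat n α j i :=
  ((isSymm_one.smul α).add triA_isSymm).inv.apply j i

lemma Bmat_rev_rev (α : ℝ) (i j : Fin n) : Bmat n α i.rev j.rev = Bmat n α i j := by
  have hrev : (shiftedTriA n α).submatrix Fin.revPerm Fin.revPerm = shiftedTriA n α := by
    ext i j
    simp [shiftedTriA, one_apply, triA_rev_rev]
  rw [Bmat_eq_inv]
  conv_rhs => rw [← hrev, inv_submatrix_equiv]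
  rfl

noncomputable def endpointVec (n : ℕ) (hn : 0 < n) (x w : ℝ) : Fin n → ℝ :=
  x • Pi.single ⟨0, hn⟩ 1 + w • Pi.single ⟨n - 1, by omega⟩ 1

lemma endpointVec_dotProduct (hn : 0 < n) (x w : ℝ) (y : Fin n → ℝ) :
    endpointVec n hn x w ⬝ᵥ y = x * y ⟨0, hn⟩ + w * y ⟨n - 1, by omega⟩ := by
  simp [endpointVec, add_dotProduct]

lemma endpointVec_dotProduct_Bmat_mulVec (hn : 0 < n) (α x w : ℝ) :
    endpointVec n hn x w ⬝ᵥ (Bmat n α *ᵥ endpointVec n hn x w) =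
      (x ^ 2 + w ^ 2) * Bmat n α ⟨0, hn⟩ ⟨0, hn⟩ +
        2 * x * w * Bmat n α ⟨n - 1, by omega⟩ ⟨0, hn⟩ := by
  have hrev : (⟨0, hn⟩ : Fin n).rev = ⟨n - 1, by omega⟩ := by ext; simp
  have hlast := Bmat_rev_rev α ⟨0, hn⟩ ⟨0, hn⟩
  rw [hrev] at hlast
  rw [endpointVec_dotProduct]
  simp only [endpointVec, mulVec_add, mulVec_smul, Pi.add_apply,
    Pi.smul_apply, mulVec_single_one, col_apply, smul_eq_mul, hlast,
    Bmat_symm α ⟨0, hn⟩ ⟨n - 1, by omega⟩]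
  ring

lemma shiftedTriA_mulVec_Bmat_mulVec (hn : 2 ≤ n) {α : ℝ} (hα : 0 < α) (b : Fin n → ℝ) :
    shiftedTriA n α *ᵥ (Bmat n α *ᵥ b) = b := by
  rw [Bmat_eq_inv, mulVec_mulVec, mul_nonsing_inv _
    ((isUnit_iff_isUnit_det _).1 (shiftedTriA_posDef hn hα).isUnit), one_mulVec]

lemma sq_sub_le_mul_dotProduct_shiftedTriA_mulVec (hn : 2 ≤ n) {α : ℝ} (hα : 0 ≤ α)
    (y : Fin n → ℝ) (i j : Fin n) :
    (y i - y j) ^ 2 ≤ n * (y ⬝ᵥ (shiftedTriA n α *ᵥ y)) := by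
  rw [dotProduct_shiftedTriA_mulVec hn]
  have : 0 ≤ α * ∑ i, y i ^ 2 := by positivity
  nlinarith [sq_sub_le_mul_pathEnergy y i j]

lemma sq_le_two_mul_dotProduct_shiftedTriA_mulVec (hn : 2 ≤ n) (y : Fin n → ℝ) (i : Fin n) :
    y i ^ 2 ≤ 2 * n * (y ⬝ᵥ (shiftedTriA n ((n : ℝ) ^ 2)⁻¹ *ᵥ y)) := by
  have hn0 : (0 : ℝ) < n := by positivity
  have h := mul_sq_le_sum_sq_add_pathEnergy y i
  rw [dotProduct_shiftedTriA_mulVec hn]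
  rw [← mul_le_mul_iff_of_pos_left hn0]
  calc (n : ℝ) * y i ^ 2 ≤ 2 * (∑ j, y j ^ 2 + n ^ 2 * pathEnergy y) := h
    _ = n * (2 * n * (((n : ℝ) ^ 2)⁻¹ * ∑ j, y j ^ 2 + pathEnergy y)) := by
        field_simp

end ShiftedPathLaplacian

section EntryBounds

variable {n : ℕ}

lemma Bmat_zero_zero_mem_Icc (hn : 2 ≤ n) :
    Bmat n ((n : ℝ) ^ 2)⁻¹ ⟨0, by omega⟩ ⟨0, by omega⟩ ∈ Set.Icc (n : ℝ) (2 * n) := by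
  have hn0 : (0 : ℝ) < n := by positivity
  have hα : (0 : ℝ) < ((n : ℝ) ^ 2)⁻¹ := by positivity
  set b := endpointVec n (by omega) 1 0
  have hy₀ := shiftedTriA_mulVec_Bmat_mulVec hn hα b
  have hvalue : b ⬝ᵥ (Bmat n ((n : ℝ) ^ 2)⁻¹ *ᵥ b) =
      Bmat n ((n : ℝ) ^ 2)⁻¹ ⟨0, by omega⟩ ⟨0, by omega⟩ := by
    rw [endpointVec_dotProduct_Bmat_mulVec]
    ring
  rw [← hvalue]
  constructor
  · have h := two_dotProduct_sub_le_of_mulVec_eq (shiftedTriA_posDef hn hα).posSemidef hy₀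
      (fun _ => (n : ℝ))
    rw [endpointVec_dotProduct, dotProduct_shiftedTriA_mulVec hn, pathEnergy_const] at h
    simp only [sum_const, card_univ, Fintype.card_fin, nsmul_eq_mul] at h
    have hcube : ((n : ℝ) ^ 2)⁻¹ * (n * (n : ℝ) ^ 2) = n := by field_simp
    linarith
  · rw [← two_dotProduct_sub_self_of_mulVec_eq hy₀, endpointVec_dotProduct]
    set y₀ := Bmat n ((n : ℝ) ^ 2)⁻¹ *ᵥ b
    have h := sq_le_two_mul_dotProduct_shiftedTriA_mulVec hn y₀ ⟨0, by omega⟩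
    nlinarith [sq_nonneg (y₀ ⟨0, by omega⟩ - 2 * n)]

lemma Bmat_last_zero_mem_Icc (hn : 2 ≤ n) :
    Bmat n ((n : ℝ) ^ 2)⁻¹ ⟨n - 1, by omega⟩ ⟨0, by omega⟩ ∈
      Set.Icc (Bmat n ((n : ℝ) ^ 2)⁻¹ ⟨0, by omega⟩ ⟨0, by omega⟩ - n / 2)
        (Bmat n ((n : ℝ) ^ 2)⁻¹ ⟨0, by omega⟩ ⟨0, by omega⟩) := by
  have hα : (0 : ℝ) < ((n : ℝ) ^ 2)⁻¹ := by positivity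
  set b := endpointVec n (by omega) 1 (-1)
  have hy₀ := shiftedTriA_mulVec_Bmat_mulVec hn hα b
  have hvalue : b ⬝ᵥ (Bmat n ((n : ℝ) ^ 2)⁻¹ *ᵥ b) =
      2 * (Bmat n ((n : ℝ) ^ 2)⁻¹ ⟨0, by omega⟩ ⟨0, by omega⟩ -
        Bmat n ((n : ℝ) ^ 2)⁻¹ ⟨n - 1, by omega⟩ ⟨0, by omega⟩) := by
    rw [endpointVec_dotProduct_Bmat_mulVec]
    ring
  have hnonneg : 0 ≤ b ⬝ᵥ (Bmat n ((n : ℝ) ^ 2)⁻¹ *ᵥ b) := by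
    simpa using two_dotProduct_sub_le_of_mulVec_eq (shiftedTriA_posDef hn hα).posSemidef hy₀ 0
  have hle : b ⬝ᵥ (Bmat n ((n : ℝ) ^ 2)⁻¹ *ᵥ b) ≤ n := by
    rw [← two_dotProduct_sub_self_of_mulVec_eq hy₀, endpointVec_dotProduct]
    set y₀ := Bmat n ((n : ℝ) ^ 2)⁻¹ *ᵥ b
    have h := sq_sub_le_mul_dotProduct_shiftedTriA_mulVec hn hα.le y₀ ⟨0, by omega⟩
      ⟨n - 1, by omega⟩
    have hn0 : (0 : ℝ) < n := by positivity
    nlinarith [sq_nonneg (y₀ ⟨0, by omega⟩ - y₀ ⟨n - 1, by omega⟩ - n)]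
  constructor <;> linarith

end EntryBounds

lemma hfun_eq (n : ℕ) (hn : 2 ≤ n) (C x z : ℝ) (y : Fin n → ℝ) :
    hfun n (by omega) C x z y =
      (2 * (endpointVec n (by omega) (√(C / n) * x) (-(√(C / n) * z / 2)) ⬝ᵥ y) -
        y ⬝ᵥ (shiftedTriA n ((n : ℝ) ^ 2)⁻¹ *ᵥ y)) / 2 := by
  rw [hfun, endpointVec_dotProduct, dotProduct_shiftedTriA_mulVec hn, pathEnergy]
  ring

/-- the supremum of `h(x,z;·)` over `ℝⁿ` is attained and equals
`C((a₁/2)x² - (1/2)a₂ x z + (a₁/8)z²)` where `a₁ = B₁₁/n`, `a₂ = Bₙ₁/n`;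
moreover `0.1 ≤ a₁ ≤ 20` and `0.1 ≤ a₂ ≤ 20`. -/
theorem stmt_6 (n : ℕ) (hn : 10 ≤ n) (C : ℝ) (hC : 0 < C)
    (a1 a2 : ℝ)
    (ha1 : a1 = Bmat n (((n : ℝ) ^ 2)⁻¹) ⟨0, by omega⟩ ⟨0, by omega⟩ / n)
    (ha2 : a2 = Bmat n (((n : ℝ) ^ 2)⁻¹) ⟨n - 1, by omega⟩ ⟨0, by omega⟩ / n) :
    (∀ x z : ℝ, ∃ ystar : Fin n → ℝ,
      (∀ y : Fin n → ℝ, hfun n (by omega) C x z y ≤ hfun n (by omega) C x z ystar) ∧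
      hfun n (by omega) C x z ystar =
        C * ((a1 / 2) * x ^ 2 - (1 / 2) * a2 * x * z + (a1 / 8) * z ^ 2)) ∧
    (0.1 : ℝ) ≤ a1 ∧ a1 ≤ 20 ∧ (0.1 : ℝ) ≤ a2 ∧ a2 ≤ 20 := by
  have h2 : 2 ≤ n := by omega
  have hn0 : (0 : ℝ) < n := by positivity
  have hα : (0 : ℝ) < ((n : ℝ) ^ 2)⁻¹ := by positivity
  obtain ⟨h00_lo, h00_hi⟩ := Bmat_zero_zero_mem_Icc h2
  obtain ⟨hl0_lo, hl0_hi⟩ := Bmat_last_zero_mem_Icc h2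
  refine ⟨fun x z => ?_, ?_⟩
  · set b := endpointVec n (by omega) (√(C / n) * x) (-(√(C / n) * z / 2))
    have hy₀ := shiftedTriA_mulVec_Bmat_mulVec h2 hα b
    refine ⟨Bmat n ((n : ℝ) ^ 2)⁻¹ *ᵥ b, fun y => ?_, ?_⟩
    · rw [hfun_eq n h2, hfun_eq n h2, two_dotProduct_sub_self_of_mulVec_eq hy₀]
      gcongr
      exact two_dotProduct_sub_le_of_mulVec_eq (shiftedTriA_posDef h2 hα).posSemidef hy₀ y
    · have hC' : n * √(C / n) ^ 2 = C := by
        rw [Real.sq_sqrt (by positivity)]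
        field_simp
      rw [hfun_eq n h2, two_dotProduct_sub_self_of_mulVec_eq hy₀,
        endpointVec_dotProduct_Bmat_mulVec, ← (eq_div_iff hn0.ne').1 ha1,
        ← (eq_div_iff hn0.ne').1 ha2]
      linear_combination (a1 / 2 * x ^ 2 - a2 / 2 * x * z + a1 / 8 * z ^ 2) * hC'
  · rw [ha1, ha2, le_div_iff₀ hn0, div_le_iff₀ hn0, le_div_iff₀ hn0, div_le_iff₀ hn0]
    refine ⟨?_, ?_, ?_, ?_⟩ <;> linarith
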